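/- Let 𝔤 be a 7-dimensional Lie algebra, X a nonzero central element, and suppose φ is a positive 4-form on 𝔤 (dual of a G2-structure with metric g) with dφ = 0. Let η = g(X/‖X‖, ·) and π: 𝔤 → 𝔥 = 𝔤/ℝX. Then the forms ψ₋ = π_*(−(1/‖X‖)ι_Xφ) and σ = π_*(φ + (1/‖X‖)ι_Xφ ∧ η) on 𝔥 satisfy d(π*ψ₋) = 0 and d(π*σ) = (π*ψ₋) ∧ dη. -/
import Mathlib


/- STATEMENT 18: Let 𝔤 be a 7-dimensional Lie algebra, X ≠ 0 central, φ a closed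
positive 4-form (the dual form of a G2-structure, with underlying metric g, i.e.
there is a g-orthonormal basis in which φ takes the standard values Φ₀).  With
η = g(X/‖X‖, ·), ψ₋ = −(1/‖X‖)ι_Xφ and σ = φ − ψ₋∧η (which represent the forms
π_*(−(1/‖X‖)ι_Xφ) and π_*(φ + (1/‖X‖)ι_Xφ∧η) on 𝔥 = 𝔤/ℝX), one has
d(π*ψ₋) = 0 and d(π*σ) = (π*ψ₋)∧dη, where d is the Chevalley–Eilenberg
differential; dη(x,y) = −η(⁅x,y⁆).  (0-based indices below.) -/

noncomputable section

open Module

def δ {n : ℕ} (a b : Fin n) : ℝ := if a = b then 1 else 0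

def fm4 {n : ℕ} (a b c d i j k l : Fin n) : ℝ :=
  Matrix.det !![δ a i, δ a j, δ a k, δ a l; δ b i, δ b j, δ b k, δ b l;
                δ c i, δ c j, δ c k, δ c l; δ d i, δ d j, δ d k, δ d l]

/-- coefficients of the standard G2 4-form Φ₀ -/
def Φc (i j k l : Fin 7) : ℝ :=
  fm4 0 1 2 3 i j k l + fm4 0 1 4 5 i j k l + fm4 2 3 4 5 i j k l
    + fm4 1 3 5 6 i j k l - fm4 0 2 5 6 i j k l - fm4 0 3 4 6 i j k l
    - fm4 1 2 4 6 i j k l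

/-- Chevalley–Eilenberg differential of a 3-form -/
def d3b {L : Type*} (br : L → L → L) (α : L → L → L → ℝ) (x₀ x₁ x₂ x₃ : L) : ℝ :=
  -α (br x₀ x₁) x₂ x₃ + α (br x₀ x₂) x₁ x₃ - α (br x₀ x₃) x₁ x₂
    - α (br x₁ x₂) x₀ x₃ + α (br x₁ x₃) x₀ x₂ - α (br x₂ x₃) x₀ x₁

/-- Chevalley–Eilenberg differential of a 4-form -/
def d4b {L : Type*} (br : L → L → L) (φ : L → L → L → L → ℝ)
    (x₀ x₁ x₂ x₃ x₄ : L) : ℝ :=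
  -φ (br x₀ x₁) x₂ x₃ x₄ + φ (br x₀ x₂) x₁ x₃ x₄ - φ (br x₀ x₃) x₁ x₂ x₄
    + φ (br x₀ x₄) x₁ x₂ x₃ - φ (br x₁ x₂) x₀ x₃ x₄ + φ (br x₁ x₃) x₀ x₂ x₄
    - φ (br x₁ x₄) x₀ x₂ x₃ - φ (br x₂ x₃) x₀ x₁ x₄ + φ (br x₂ x₄) x₀ x₁ x₃
    - φ (br x₃ x₄) x₀ x₁ x₂

/-- wedge of a 3-form with a 2-form -/
def w32 {L : Type*} (ψ : L → L → L → ℝ) (β : L → L → ℝ) (x₀ x₁ x₂ x₃ x₄ : L) : ℝ :=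
  β x₀ x₁ * ψ x₂ x₃ x₄ - β x₀ x₂ * ψ x₁ x₃ x₄ + β x₀ x₃ * ψ x₁ x₂ x₄
    - β x₀ x₄ * ψ x₁ x₂ x₃ + β x₁ x₂ * ψ x₀ x₃ x₄ - β x₁ x₃ * ψ x₀ x₂ x₄
    + β x₁ x₄ * ψ x₀ x₂ x₃ + β x₂ x₃ * ψ x₀ x₁ x₄ - β x₂ x₄ * ψ x₀ x₁ x₃
    + β x₃ x₄ * ψ x₀ x₁ x₂

theorem quotient_forms_of_cocalibrated
    (𝔤 : Type*) [LieRing 𝔤] [LieAlgebra ℝ 𝔤] [Module.Finite ℝ 𝔤]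
    (hdim : finrank ℝ 𝔤 = 7)
    (X : 𝔤) (hX : X ≠ 0) (hcentral : ∀ y : 𝔤, ⁅X, y⁆ = 0)
    (φ : 𝔤 [⋀^Fin 4]→ₗ[ℝ] ℝ)
    (g : LinearMap.BilinForm ℝ 𝔤)
    -- φ is the dual 4-form of a G2-structure with underlying metric g
    (B : Basis (Fin 7) ℝ 𝔤)
    (hBg : ∀ i j, g (B i) (B j) = if i = j then 1 else 0)
    (hBφ : ∀ i j k l, φ ![B i, B j, B k, B l] = Φc i j k l)
    -- φ is closed
    (hφ : ∀ x₀ x₁ x₂ x₃ x₄ : 𝔤,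
      d4b (fun x y => ⁅x, y⁆) (fun a b c d => φ ![a, b, c, d]) x₀ x₁ x₂ x₃ x₄ = 0)
    -- η = g(X/‖X‖, ·), ψ₋ = −(1/‖X‖)ι_Xφ, σ = φ − ψ₋∧η
    (η : 𝔤 → ℝ) (hη : ∀ y, η y = (Real.sqrt (g X X))⁻¹ * g X y)
    (ψ : 𝔤 → 𝔤 → 𝔤 → ℝ)
    (hψdef : ∀ a b c, ψ a b c = -((Real.sqrt (g X X))⁻¹ * φ ![X, a, b, c]))
    (σ : 𝔤 → 𝔤 → 𝔤 → 𝔤 → ℝ)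
    (hσdef : ∀ a b c d, σ a b c d = φ ![a, b, c, d]
      - (ψ a b c * η d - ψ a b d * η c + ψ a c d * η b - ψ b c d * η a)) :
    (∀ x₀ x₁ x₂ x₃ : 𝔤, d3b (fun x y => ⁅x, y⁆) ψ x₀ x₁ x₂ x₃ = 0) ∧
    (∀ x₀ x₁ x₂ x₃ x₄ : 𝔤,
      d4b (fun x y => ⁅x, y⁆) σ x₀ x₁ x₂ x₃ x₄
        = w32 ψ (fun u v => -η ⁅u, v⁆) x₀ x₁ x₂ x₃ x₄) := by

  have hzero : ∀ a b c : 𝔤, φ ![0, a, b, c] = 0 := by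
    intro a b c
    exact φ.map_coord_zero 0 (by simp)
  have hswapX : ∀ a c d : 𝔤, φ ![a, X, c, d] = -φ ![X, a, c, d] := by
    intro a c d
    have h := φ.map_swap ![X, a, c, d] (show (0 : Fin 4) ≠ 1 by decide)
    have he : (![X, a, c, d] ∘ Equiv.swap (0 : Fin 4) 1) = ![a, X, c, d] := by
      funext i
      fin_cases i <;> simp [Equiv.swap_apply_def]
    rw [he] at h
    exact h
  have hd : ∀ x₀ x₁ x₂ x₃ : 𝔤,
      -ψ ⁅x₀, x₁⁆ x₂ x₃ + ψ ⁅x₀, x₂⁆ x₁ x₃ - ψ ⁅x₀, x₃⁆ x₁ x₂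
        - ψ ⁅x₁, x₂⁆ x₀ x₃ + ψ ⁅x₁, x₃⁆ x₀ x₂ - ψ ⁅x₂, x₃⁆ x₀ x₁ = 0 := by
    intro x₀ x₁ x₂ x₃
    have h := hφ X x₀ x₁ x₂ x₃
    simp only [d4b, hcentral, hzero, hswapX] at h
    simp only [hψdef]
    linear_combination (Real.sqrt (g X X))⁻¹ * h
  constructor
  · intro x₀ x₁ x₂ x₃
    simpa only [d3b] using hd x₀ x₁ x₂ x₃
  · intro x₀ x₁ x₂ x₃ x₄
    have h := hφ x₀ x₁ x₂ x₃ x₄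
    simp only [d4b] at h
    simp only [d4b, w32, hσdef]
    linear_combination h - η x₀ * hd x₁ x₂ x₃ x₄ + η x₁ * hd x₀ x₂ x₃ x₄
      - η x₂ * hd x₀ x₁ x₃ x₄ + η x₃ * hd x₀ x₁ x₂ x₄ - η x₄ * hd x₀ x₁ x₂ x₃

end
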